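/- arXiv:1108.5001 — 3 statements merged into one kernel-verified Lean document; each statement's English description precedes it below -/
import Mathlib

section
/- Let ψ : ℝ^{α+2} → ℝ and φ : ℝ^{β+2} → ℝ be c-Lipschitz for the sup metric, t > 1, M ≥ 1, and let f¹, f² both be (t,M)-close to ψ and g¹, g² both be (t,M)-close to φ. For l = 1, 2 let (F^l(i,j), G^l(i,j)) be the rational state system for (f^l, g^l) with positive initial data (z_i)_i, (w^j)_j. Suppose positive double sequences (z(i,j)), (w(i,j)) satisfy z(i,0) = z_i, w(0,j) = w^j and the dynamical inequalities f¹(w(i,j), z(i,j), …, z(i+α,j)) ≤ z(i,j+1) ≤ f²(w(i,j), z(i,j), …, z(i+α,j)) and g¹(w(i,j), z(i,j), …, z(i+β,j)) ≤ w(i+1,j) ≤ g²(w(i,j), z(i,j), …, z(i+β,j)) for all i, j. Then for l = 1, 2 and all i, j: max(F^l(i,j+1)/z(i,j+1), z(i,j+1)/F^l(i,j+1)) ≤ M^{2·P_{i+j(γ+1)}(c)} and max(G^l(i+1,j)/w(i+1,j), w(i+1,j)/G^l(i+1,j)) ≤ M^{2·P_{i+j(γ+1)}(c)}. -/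
/-!
Work in the coordinates `logb t`. There `(t,M)`-closeness says that each map stays within
`logb t M` of the `c`-Lipschitz map `ψ` (resp. `φ`). Since `z(i,j+1)` is squeezed between `f¹` and
`f²` evaluated at one and the same stencil, its logarithm is within `2 logb t M` of that of
`f^l` at the same stencil, and moving `f^l` to the stencil of the exact system costs `c` times
the log-distance of the two stencils. Those stencils only involve entries of smaller weight
`i + j(γ+1)`, so induction on the weight bounds the log-error by `2 P_n(c) logb t M`, which
exponentiates to the ratio bound.
-/

open Real Finset

def stencil (N : ℕ) (z w : ℕ → ℕ → ℝ) (i j : ℕ) : Fin (N + 2) → ℝ :=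
  Fin.cons (w i j) fun k : Fin (N + 1) => z (i + k) j

/-- `(t,M)`-closeness; note `logb t x` unfolds to `log x / log t`. -/
def IsTMClose {N : ℕ} (t M : ℝ) (f ψ : (Fin N → ℝ) → ℝ) : Prop :=
  ∀ v : Fin N → ℝ, (∀ k, 0 < v k) → |logb t (f v) - ψ (fun k => logb t (v k))| ≤ logb t M

/-- `2 P_{n-1}(c) logb t M`, with `P_{-1} = 0`. -/
noncomputable def errorBound (c t M : ℝ) (n : ℕ) : ℝ :=
  2 * (∑ k ∈ range n, c ^ k) * logb t M

lemma errorBound_nonneg {c t M : ℝ} (hc : 0 ≤ c) (ht : 1 < t) (hM : 1 ≤ M) (n : ℕ) :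
    0 ≤ errorBound c t M n :=
  mul_nonneg (mul_nonneg zero_le_two (sum_nonneg fun k _ => pow_nonneg hc k))
    (logb_nonneg ht hM)

lemma errorBound_succ (c t M : ℝ) (n : ℕ) :
    errorBound c t M (n + 1) = 2 * logb t M + c * errorBound c t M n := by
  rw [errorBound, errorBound, geom_sum_succ]
  ring

lemma stencil_pos {N : ℕ} {z w : ℕ → ℕ → ℝ} {i j : ℕ} (hw : 0 < w i j)
    (hz : ∀ k ≤ N, 0 < z (i + k) j) : ∀ k, 0 < stencil N z w i j k :=
  Fin.cases hw fun k => hz k k.is_le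

lemma dist_logb_stencil_le {N : ℕ} {t d : ℝ} {z w z' w' : ℕ → ℕ → ℝ} {i j : ℕ} (hd : 0 ≤ d)
    (hw : dist (logb t (w i j)) (logb t (w' i j)) ≤ d)
    (hz : ∀ k ≤ N, dist (logb t (z (i + k) j)) (logb t (z' (i + k) j)) ≤ d) :
    dist (fun k => logb t (stencil N z w i j k)) (fun k => logb t (stencil N z' w' i j k)) ≤ d :=
  (dist_pi_le_iff hd).2 (Fin.cases hw fun k => hz k k.is_le)

lemma max_div_le_rpow_of_dist_logb_le {t M a b P : ℝ} (ht : 1 < t) (hM : 0 < M) (ha : 0 < a)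
    (hb : 0 < b) (h : dist (logb t a) (logb t b) ≤ P * logb t M) :
    max (a / b) (b / a) ≤ M ^ P := by
  have hMP : 0 < M ^ P := rpow_pos_of_pos hM P
  rw [Real.dist_eq, abs_le] at h
  rw [max_le_iff, ← logb_le_logb ht (div_pos ha hb) hMP, ← logb_le_logb ht (div_pos hb ha) hMP,
    logb_div ha.ne' hb.ne', logb_div hb.ne' ha.ne', logb_rpow_eq_mul_logb_of_pos hM]
  constructor <;> linarith

lemma pos_of_rationalStateSystem {α β : ℕ} {f : (Fin (α + 2) → ℝ) → ℝ}
    {g : (Fin (β + 2) → ℝ) → ℝ} {F G : ℕ → ℕ → ℝ} (hf : ∀ v, (∀ k, 0 < v k) → 0 < f v)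
    (hg : ∀ v, (∀ k, 0 < v k) → 0 < g v) (hF0 : ∀ i, 0 < F i 0) (hG0 : ∀ j, 0 < G 0 j)
    (hF : ∀ i j, F i (j + 1) = f (stencil α F G i j))
    (hG : ∀ i j, G (i + 1) j = g (stencil β F G i j)) :
    (∀ i j, 0 < F i j) ∧ ∀ i j, 0 < G i j := by
  have hG_row : ∀ j, (∀ i, 0 < F i j) → ∀ i, 0 < G i j := by
    intro j hFj i
    induction i with
    | zero => exact hG0 j
    | succ i ih => rw [hG]; exact hg _ (stencil_pos ih fun k _ => hFj _)
  suffices h : ∀ j, (∀ i, 0 < F i j) ∧ ∀ i, 0 < G i j from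
    ⟨fun i j => (h j).1 i, fun i j => (h j).2 i⟩
  intro j
  induction j with
  | zero => exact ⟨hF0, hG_row 0 hF0⟩
  | succ j ih =>
    have hFj : ∀ i, 0 < F i (j + 1) := fun i => by
      rw [hF]; exact hf _ (stencil_pos (ih.2 i) fun k _ => ih.1 _)
    exact ⟨hFj, hG_row _ hFj⟩

lemma dist_logb_le_of_le_of_le {N : ℕ} {t M c x : ℝ} {ψ f₁ f₂ f : (Fin N → ℝ) → ℝ}
    {u v : Fin N → ℝ} (ht : 1 < t) (hψ : ∀ v w : Fin N → ℝ, |ψ v - ψ w| ≤ c * dist v w)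
    (hf₁ : IsTMClose t M f₁ ψ) (hf₂ : IsTMClose t M f₂ ψ) (hf : IsTMClose t M f ψ)
    (hf₁pos : 0 < f₁ u) (hu : ∀ k, 0 < u k) (hv : ∀ k, 0 < v k) (h₁ : f₁ u ≤ x)
    (h₂ : x ≤ f₂ u) :
    dist (logb t (f v)) (logb t x)
      ≤ 2 * logb t M + c * dist (fun k => logb t (v k)) (fun k => logb t (u k)) := by
  have hψvu := abs_le.mp (hψ (fun k => logb t (v k)) (fun k => logb t (u k)))
  have hf₁u := abs_le.mp (hf₁ u hu)
  have hf₂u := abs_le.mp (hf₂ u hu)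
  have hfv := abs_le.mp (hf v hv)
  have hx₁ : logb t (f₁ u) ≤ logb t x := logb_le_logb_of_le ht hf₁pos h₁
  have hx₂ : logb t x ≤ logb t (f₂ u) := logb_le_logb_of_le ht (hf₁pos.trans_le h₁) h₂
  rw [Real.dist_eq, abs_le]
  constructor <;> linarith

lemma dist_logb_succ_le {α β : ℕ} {c t M : ℝ} {ψ : (Fin (α + 2) → ℝ) → ℝ}
    {φ : (Fin (β + 2) → ℝ) → ℝ} {f₁ f₂ f : (Fin (α + 2) → ℝ) → ℝ}
    {g₁ g₂ g : (Fin (β + 2) → ℝ) → ℝ} {z w F G : ℕ → ℕ → ℝ} (hc : 0 ≤ c) (ht : 1 < t)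
    (hψ : ∀ v w : Fin (α + 2) → ℝ, |ψ v - ψ w| ≤ c * dist v w)
    (hφ : ∀ v w : Fin (β + 2) → ℝ, |φ v - φ w| ≤ c * dist v w)
    (hf₁ : IsTMClose t M f₁ ψ) (hf₂ : IsTMClose t M f₂ ψ) (hf : IsTMClose t M f ψ)
    (hg₁ : IsTMClose t M g₁ φ) (hg₂ : IsTMClose t M g₂ φ) (hg : IsTMClose t M g φ)
    (hf₁pos : ∀ v, (∀ k, 0 < v k) → 0 < f₁ v) (hg₁pos : ∀ v, (∀ k, 0 < v k) → 0 < g₁ v)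
    (hzpos : ∀ i j, 0 < z i j) (hwpos : ∀ i j, 0 < w i j)
    (hFpos : ∀ i j, 0 < F i j) (hGpos : ∀ i j, 0 < G i j)
    (hF : ∀ i j, F i (j + 1) = f (stencil α F G i j))
    (hG : ∀ i j, G (i + 1) j = g (stencil β F G i j))
    (hzlow : ∀ i j, f₁ (stencil α z w i j) ≤ z i (j + 1))
    (hzhigh : ∀ i j, z i (j + 1) ≤ f₂ (stencil α z w i j))
    (hwlow : ∀ i j, g₁ (stencil β z w i j) ≤ w (i + 1) j)
    (hwhigh : ∀ i j, w (i + 1) j ≤ g₂ (stencil β z w i j))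
    {i j : ℕ} {d : ℝ} (hd : 0 ≤ d) (hw : dist (logb t (G i j)) (logb t (w i j)) ≤ d)
    (hz : ∀ k ≤ max α β, dist (logb t (F (i + k) j)) (logb t (z (i + k) j)) ≤ d) :
    dist (logb t (F i (j + 1))) (logb t (z i (j + 1))) ≤ 2 * logb t M + c * d ∧
      dist (logb t (G (i + 1) j)) (logb t (w (i + 1) j)) ≤ 2 * logb t M + c * d := by
  have hzw : ∀ N k, 0 < stencil N z w i j k := fun _ =>
    stencil_pos (hwpos i j) fun _ _ => hzpos _ _
  have hFG : ∀ N k, 0 < stencil N F G i j k := fun _ =>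
    stencil_pos (hGpos i j) fun _ _ => hFpos _ _
  constructor
  · rw [hF]
    calc _ ≤ 2 * logb t M + c * dist (fun k => logb t (stencil α F G i j k))
          (fun k => logb t (stencil α z w i j k)) :=
          dist_logb_le_of_le_of_le ht hψ hf₁ hf₂ hf (hf₁pos _ (hzw α)) (hzw α) (hFG α)
            (hzlow i j) (hzhigh i j)
      _ ≤ 2 * logb t M + c * d := by
          gcongr
          exact dist_logb_stencil_le hd hw fun k hk => hz k (hk.trans (le_max_left α β))
  · rw [hG]
    calc _ ≤ 2 * logb t M + c * dist (fun k => logb t (stencil β F G i j k))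
          (fun k => logb t (stencil β z w i j k)) :=
          dist_logb_le_of_le_of_le ht hφ hg₁ hg₂ hg (hg₁pos _ (hzw β)) (hzw β) (hFG β)
            (hwlow i j) (hwhigh i j)
      _ ≤ 2 * logb t M + c * d := by
          gcongr
          exact dist_logb_stencil_le hd hw fun k hk => hz k (hk.trans (le_max_right α β))

/-- Induction on the weight `i + j(γ+1)`: the stencils of `(i, j+1)` and `(i+1, j)` only involve
entries `(i, j)` and `(i+k, j)`, `k ≤ γ`, whose outputs have smaller weight. -/
lemma le_of_stencil_step {γ : ℕ} {a c : ℝ} {Ez Ew : ℕ → ℕ → ℝ} {b : ℕ → ℝ}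
    (hz0 : ∀ i, Ez i 0 = 0) (hw0 : ∀ j, Ew 0 j = 0)
    (hstep : ∀ i j d, 0 ≤ d → Ew i j ≤ d → (∀ k ≤ γ, Ez (i + k) j ≤ d) →
      Ez i (j + 1) ≤ a + c * d ∧ Ew (i + 1) j ≤ a + c * d)
    (hb : ∀ n, 0 ≤ b n) (hb_succ : ∀ n, b (n + 1) = a + c * b n) :
    ∀ n i j, i + j * (γ + 1) < n → Ez i (j + 1) ≤ b n ∧ Ew (i + 1) j ≤ b n := by
  intro n
  induction n with
  | zero => exact fun i j h => absurd h (Nat.not_lt_zero _)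
  | succ n ih =>
    intro i j hij
    have hw : Ew i j ≤ b n := by
      cases i with
      | zero => exact (hw0 j).trans_le (hb n)
      | succ i => exact (ih i j (by omega)).2
    have hz : ∀ k ≤ γ, Ez (i + k) j ≤ b n := by
      intro k hk
      cases j with
      | zero => exact (hz0 _).trans_le (hb n)
      | succ j => exact (ih (i + k) j (by rw [Nat.succ_mul] at hij; omega)).1
    rw [hb_succ]
    exact hstep i j _ (hb n) hw hz

/-- dynamical inequalities. If positive sequences `(z, w)` satisfy the
dynamical inequalities between `(f¹, g¹)` and `(f², g²)` — all `(t,M)`-close to the same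
`c`-Lipschitz pair `(ψ, φ)` — with the same initial data as the genuine rational state
systems `(F^l, G^l)`, then all ratios are bounded by `M^{2 P_{i+j(γ+1)}(c)}`. -/
theorem statement10 (α β : ℕ) (c t M : ℝ) (hc : 0 ≤ c) (ht : 1 < t) (hM : 1 ≤ M)
    (ψ : (Fin (α + 2) → ℝ) → ℝ) (φ : (Fin (β + 2) → ℝ) → ℝ)
    (hψ : ∀ v w : Fin (α + 2) → ℝ, |ψ v - ψ w| ≤ c * dist v w)
    (hφ : ∀ v w : Fin (β + 2) → ℝ, |φ v - φ w| ≤ c * dist v w)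
    (f1 f2 : (Fin (α + 2) → ℝ) → ℝ) (g1 g2 : (Fin (β + 2) → ℝ) → ℝ)
    (hf1pos : ∀ v : Fin (α + 2) → ℝ, (∀ k, 0 < v k) → 0 < f1 v)
    (hf2pos : ∀ v : Fin (α + 2) → ℝ, (∀ k, 0 < v k) → 0 < f2 v)
    (hg1pos : ∀ v : Fin (β + 2) → ℝ, (∀ k, 0 < v k) → 0 < g1 v)
    (hg2pos : ∀ v : Fin (β + 2) → ℝ, (∀ k, 0 < v k) → 0 < g2 v)
    (hf1 : ∀ v : Fin (α + 2) → ℝ, (∀ k, 0 < v k) →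
      |Real.log (f1 v) / Real.log t - ψ (fun k => Real.log (v k) / Real.log t)|
        ≤ Real.log M / Real.log t)
    (hf2 : ∀ v : Fin (α + 2) → ℝ, (∀ k, 0 < v k) →
      |Real.log (f2 v) / Real.log t - ψ (fun k => Real.log (v k) / Real.log t)|
        ≤ Real.log M / Real.log t)
    (hg1 : ∀ v : Fin (β + 2) → ℝ, (∀ k, 0 < v k) →
      |Real.log (g1 v) / Real.log t - φ (fun k => Real.log (v k) / Real.log t)|
        ≤ Real.log M / Real.log t)
    (hg2 : ∀ v : Fin (β + 2) → ℝ, (∀ k, 0 < v k) →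
      |Real.log (g2 v) / Real.log t - φ (fun k => Real.log (v k) / Real.log t)|
        ≤ Real.log M / Real.log t)
    (z0 w0 : ℕ → ℝ) (hz0 : ∀ i, 0 < z0 i) (hw0 : ∀ j, 0 < w0 j)
    (F1 G1 F2 G2 : ℕ → ℕ → ℝ)
    (hF10 : ∀ i, F1 i 0 = z0 i) (hG10 : ∀ j, G1 0 j = w0 j)
    (hF1 : ∀ i j, F1 i (j + 1) = f1 (Fin.cons (G1 i j) (fun k : Fin (α + 1) => F1 (i + (k : ℕ)) j)))
    (hG1 : ∀ i j, G1 (i + 1) j = g1 (Fin.cons (G1 i j) (fun k : Fin (β + 1) => F1 (i + (k : ℕ)) j)))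
    (hF20 : ∀ i, F2 i 0 = z0 i) (hG20 : ∀ j, G2 0 j = w0 j)
    (hF2 : ∀ i j, F2 i (j + 1) = f2 (Fin.cons (G2 i j) (fun k : Fin (α + 1) => F2 (i + (k : ℕ)) j)))
    (hG2 : ∀ i j, G2 (i + 1) j = g2 (Fin.cons (G2 i j) (fun k : Fin (β + 1) => F2 (i + (k : ℕ)) j)))
    (z w : ℕ → ℕ → ℝ) (hzpos : ∀ i j, 0 < z i j) (hwpos : ∀ i j, 0 < w i j)
    (hz0' : ∀ i, z i 0 = z0 i) (hw0' : ∀ j, w 0 j = w0 j)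
    (hzlow : ∀ i j, f1 (Fin.cons (w i j) (fun k : Fin (α + 1) => z (i + (k : ℕ)) j)) ≤ z i (j + 1))
    (hzhigh : ∀ i j, z i (j + 1) ≤ f2 (Fin.cons (w i j) (fun k : Fin (α + 1) => z (i + (k : ℕ)) j)))
    (hwlow : ∀ i j, g1 (Fin.cons (w i j) (fun k : Fin (β + 1) => z (i + (k : ℕ)) j)) ≤ w (i + 1) j)
    (hwhigh : ∀ i j, w (i + 1) j ≤ g2 (Fin.cons (w i j) (fun k : Fin (β + 1) => z (i + (k : ℕ)) j))) :
    ∀ i j : ℕ,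
      max (F1 i (j + 1) / z i (j + 1)) (z i (j + 1) / F1 i (j + 1))
        ≤ M ^ (2 * ∑ k ∈ Finset.range (i + j * (max α β + 1) + 1), c ^ k) ∧
      max (F2 i (j + 1) / z i (j + 1)) (z i (j + 1) / F2 i (j + 1))
        ≤ M ^ (2 * ∑ k ∈ Finset.range (i + j * (max α β + 1) + 1), c ^ k) ∧
      max (G1 (i + 1) j / w (i + 1) j) (w (i + 1) j / G1 (i + 1) j)
        ≤ M ^ (2 * ∑ k ∈ Finset.range (i + j * (max α β + 1) + 1), c ^ k) ∧
      max (G2 (i + 1) j / w (i + 1) j) (w (i + 1) j / G2 (i + 1) j)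
        ≤ M ^ (2 * ∑ k ∈ Finset.range (i + j * (max α β + 1) + 1), c ^ k) := by
  intro i j
  obtain ⟨hF1pos, hG1pos⟩ := pos_of_rationalStateSystem hf1pos hg1pos
    (fun i => (hF10 i).symm ▸ hz0 i) (fun j => (hG10 j).symm ▸ hw0 j) hF1 hG1
  obtain ⟨hF2pos, hG2pos⟩ := pos_of_rationalStateSystem hf2pos hg2pos
    (fun i => (hF20 i).symm ▸ hz0 i) (fun j => (hG20 j).symm ▸ hw0 j) hF2 hG2
  have err₁ := le_of_stencil_step
    (Ez := fun i j => dist (logb t (F1 i j)) (logb t (z i j)))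
    (Ew := fun i j => dist (logb t (G1 i j)) (logb t (w i j)))
    (fun i => by rw [hF10, hz0', dist_self]) (fun j => by rw [hG10, hw0', dist_self])
    (fun _ _ _ hd hw hz => dist_logb_succ_le hc ht hψ hφ hf1 hf2 hf1 hg1 hg2 hg1 hf1pos hg1pos
      hzpos hwpos hF1pos hG1pos hF1 hG1 hzlow hzhigh hwlow hwhigh hd hw hz)
    (errorBound_nonneg hc ht hM) (errorBound_succ c t M) _ i j (Nat.lt_succ_self _)
  have err₂ := le_of_stencil_step
    (Ez := fun i j => dist (logb t (F2 i j)) (logb t (z i j)))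
    (Ew := fun i j => dist (logb t (G2 i j)) (logb t (w i j)))
    (fun i => by rw [hF20, hz0', dist_self]) (fun j => by rw [hG20, hw0', dist_self])
    (fun _ _ _ hd hw hz => dist_logb_succ_le hc ht hψ hφ hf1 hf2 hf2 hg1 hg2 hg2 hf1pos hg1pos
      hzpos hwpos hF2pos hG2pos hF2 hG2 hzlow hzhigh hwlow hwhigh hd hw hz)
    (errorBound_nonneg hc ht hM) (errorBound_succ c t M) _ i j (Nat.lt_succ_self _)
  have hM0 : 0 < M := zero_lt_one.trans_le hM
  exact ⟨max_div_le_rpow_of_dist_logb_le ht hM0 (hF1pos _ _) (hzpos _ _) err₁.1,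
    max_div_le_rpow_of_dist_logb_le ht hM0 (hF2pos _ _) (hzpos _ _) err₂.1,
    max_div_le_rpow_of_dist_logb_le ht hM0 (hG1pos _ _) (hwpos _ _) err₁.2,
    max_div_le_rpow_of_dist_logb_le ht hM0 (hG2pos _ _) (hwpos _ _) err₂.2⟩
end

section
/- Let ψ : ℝ^{α+2} → ℝ and φ : ℝ^{β+2} → ℝ be c-Lipschitz for the sup metric, t > 1, M ≥ 1, and for k, l ∈ {1,2} let f^k(l) be (t,M)-close to ψ and g^k(l) be (t,M)-close to φ. For l = 1, 2 let positive double sequences (z_l(i,j)), (w_l(i,j)) satisfy z_l(i,0) = z_i(l), w_l(0,j) = w^j(l), and the dynamical inequalities f^1(l)(w_l(i,j), z_l(i,j), …, z_l(i+α,j)) ≤ z_l(i,j+1) ≤ f^2(l)(w_l(i,j), z_l(i,j), …, z_l(i+α,j)) and g^1(l)(w_l(i,j), z_l(i,j), …, z_l(i+β,j)) ≤ w_l(i+1,j) ≤ g^2(l)(w_l(i,j), z_l(i,j), …, z_l(i+β,j)). Suppose ρ ≥ 1 satisfies (z_i(1)/z_i(2))^{±1} ≤ ρ and (w^j(1)/w^j(2))^{±1}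 ≤ ρ for all i, j. Then for all i, j: (z_1(i,j+1)/z_2(i,j+1))^{±1} ≤ M^{6·P_{i+j(γ+1)}(c)} · ρ^{c̃^{i+1+j(γ+1)}} and (w_1(i+1,j)/w_2(i+1,j))^{±1} ≤ M^{6·P_{i+j(γ+1)}(c)} · ρ^{c̃^{i+1+j(γ+1)}}. -/
/-!
In logarithmic coordinates (base `t`) each sandwiched value lies within `log_t M` of `ψ` or `φ`
evaluated at the logarithms of its inputs, so the log-distance between the two solutions grows
by at most `x ↦ 2 log_t M + c x` per step. Every entry `z(i, j+1)` or `w(i+1, j)` is reached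
from the initial data in at most `i + 1 + j (γ + 1)` steps, which gives (with room to spare in
the constant `6`) the bound
`6 log_t M · P_{i + j(γ+1)}(c) + log_t ρ · c̃ ^ (i + 1 + j (γ + 1))` on the log-distance.
-/

open Real Finset

lemma abs_logb_sub_le_of_le_of_le {t δ a y₁ y₂ x : ℝ} (ht : 1 < t) (hy₁ : 0 < y₁)
    (h₁ : |logb t y₁ - a| ≤ δ) (h₂ : |logb t y₂ - a| ≤ δ) (hlow : y₁ ≤ x) (hhigh : x ≤ y₂) :
    |logb t x - a| ≤ δ := by
  have hx₁ : logb t y₁ ≤ logb t x := logb_le_logb_of_le ht hy₁ hlow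
  have hx₂ : logb t x ≤ logb t y₂ := logb_le_logb_of_le ht (hy₁.trans_le hlow) hhigh
  rw [abs_le] at h₁ h₂ ⊢
  constructor <;> linarith

lemma abs_sub_le_of_near_lipschitz {X : Type*} [PseudoMetricSpace X] {ψ : X → ℝ} {c μ D : ℝ}
    (hc : 0 ≤ c) (hψ : ∀ u v, |ψ u - ψ v| ≤ c * dist u v) {u₀ u₁ : X} {x₀ x₁ : ℝ}
    (h₀ : |x₀ - ψ u₀| ≤ μ) (h₁ : |x₁ - ψ u₁| ≤ μ) (hD : dist u₀ u₁ ≤ D) :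
    |x₀ - x₁| ≤ 2 * μ + c * D := by
  have hψD : |ψ u₀ - ψ u₁| ≤ c * D := (hψ u₀ u₁).trans (mul_le_mul_of_nonneg_left hD hc)
  calc |x₀ - x₁| ≤ |x₀ - ψ u₀| + |ψ u₀ - ψ u₁| + |ψ u₁ - x₁| := by
        linarith [abs_sub_le x₀ (ψ u₀) x₁, abs_sub_le (ψ u₀) (ψ u₁) x₁]
    _ ≤ μ + c * D + μ := by rw [abs_sub_comm (ψ u₁)]; gcongr
    _ = 2 * μ + c * D := by ring

lemma dist_logb_cons_le {n : ℕ} {t b w₀ w₁ : ℝ} {z₀ z₁ : Fin n → ℝ}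
    (hw : |logb t w₀ - logb t w₁| ≤ b) (hz : ∀ k, |logb t (z₀ k) - logb t (z₁ k)| ≤ b) :
    dist (fun m => logb t ((Fin.cons w₀ z₀ : Fin (n + 1) → ℝ) m))
      (fun m => logb t ((Fin.cons w₁ z₁ : Fin (n + 1) → ℝ) m)) ≤ b := by
  rw [dist_pi_le_iff ((abs_nonneg _).trans hw)]
  intro m
  rw [Real.dist_eq]
  exact Fin.cases hw hz m

lemma abs_logb_sub_le_of_sandwich {n : ℕ} {t M c b : ℝ} (ht : 1 < t) (hc : 0 ≤ c)
    {ψ : (Fin (n + 2) → ℝ) → ℝ} (hψ : ∀ u v, |ψ u - ψ v| ≤ c * dist u v)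
    {f : Fin 2 → Fin 2 → (Fin (n + 2) → ℝ) → ℝ}
    (hfpos : ∀ l v, (∀ m, 0 < v m) → 0 < f 0 l v)
    (hf : ∀ k l v, (∀ m, 0 < v m) → |logb t (f k l v) - ψ (fun m => logb t (v m))| ≤ logb t M)
    {x w : Fin 2 → ℝ} {z : Fin 2 → Fin (n + 1) → ℝ} (hw : ∀ l, 0 < w l) (hz : ∀ l k, 0 < z l k)
    (hlow : ∀ l, f 0 l (Fin.cons (w l) (z l)) ≤ x l)
    (hhigh : ∀ l, x l ≤ f 1 l (Fin.cons (w l) (z l)))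
    (hwb : |logb t (w 0) - logb t (w 1)| ≤ b) (hzb : ∀ k, |logb t (z 0 k) - logb t (z 1 k)| ≤ b) :
    |logb t (x 0) - logb t (x 1)| ≤ 2 * logb t M + c * b := by
  set v : Fin 2 → Fin (n + 2) → ℝ := fun l => Fin.cons (w l) (z l)
  have hpos : ∀ l m, 0 < v l m := fun l m => Fin.cases (hw l) (hz l) m
  have hnear : ∀ l, |logb t (x l) - ψ (fun m => logb t (v l m))| ≤ logb t M :=
    fun l => abs_logb_sub_le_of_le_of_le ht (hfpos l (v l) (hpos l)) (hf 0 l (v l) (hpos l))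
      (hf 1 l (v l) (hpos l)) (hlow l) (hhigh l)
  exact abs_sub_le_of_near_lipschitz hc hψ (hnear 0) (hnear 1) (dist_logb_cons_le hwb hzb)

lemma max_div_div_le_rpow_iff {t a b s : ℝ} (ht : 1 < t) (ha : 0 < a) (hb : 0 < b) :
    max (a / b) (b / a) ≤ t ^ s ↔ |logb t a - logb t b| ≤ s := by
  rw [max_le_iff, abs_sub_le_iff, ← logb_le_iff_le_rpow ht (div_pos ha hb),
    ← logb_le_iff_le_rpow ht (div_pos hb ha), logb_div ha.ne' hb.ne', logb_div hb.ne' ha.ne']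

lemma rpow_logb_mul_add_logb_mul {t x y : ℝ} (ht₀ : 0 < t) (ht₁ : t ≠ 1) (hx : 0 < x) (hy : 0 < y)
    (a b : ℝ) : t ^ (logb t x * a + logb t y * b) = x ^ a * y ^ b := by
  rw [rpow_add ht₀, rpow_mul ht₀.le, rpow_mul ht₀.le, rpow_logb ht₀ ht₁ hx, rpow_logb ht₀ ht₁ hy]

def geomBound (a r c : ℝ) (n : ℕ) : ℝ :=
  a * ∑ k ∈ range n, c ^ k + r * max c 1 ^ n

lemma geomBound_zero (a r c : ℝ) : geomBound a r c 0 = r := by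
  simp [geomBound]

lemma geomBound_monotone {a r c : ℝ} (ha : 0 ≤ a) (hr : 0 ≤ r) (hc : 0 ≤ c) :
    Monotone (geomBound a r c) := by
  intro m n hmn
  have hsum : ∑ k ∈ range m, c ^ k ≤ ∑ k ∈ range n, c ^ k :=
    sum_le_sum_of_subset_of_nonneg (range_subset_range.mpr hmn) fun k _ _ => pow_nonneg hc k
  have hpow : max c 1 ^ m ≤ max c 1 ^ n := pow_le_pow_right₀ (le_max_right c 1) hmn
  unfold geomBound
  gcongr

lemma add_mul_geomBound_le_succ {a r c : ℝ} (hr : 0 ≤ r) (n : ℕ) :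
    a + c * geomBound a r c n ≤ geomBound a r c (n + 1) := by
  have hpow : c * (r * max c 1 ^ n) ≤ max c 1 * (r * max c 1 ^ n) :=
    mul_le_mul_of_nonneg_right (le_max_left c 1)
      (mul_nonneg hr (pow_nonneg (zero_le_one.trans (le_max_right c 1)) n))
  unfold geomBound
  rw [geom_sum_succ, pow_succ]
  linarith

section Grid

variable {Z W : ℕ → ℕ → ℝ} {B : ℕ → ℝ} {γ : ℕ}

lemma grid_w_le (hB : Monotone B) (hW₀ : ∀ j, W 0 j ≤ B 0)
    (hW : ∀ i j n, W i j ≤ B n → (∀ k ≤ γ, Z (i + k) j ≤ B n) → W (i + 1) j ≤ B (n + 1))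
    {j : ℕ} (hrow : ∀ i, ∀ k ≤ γ, Z (i + k) j ≤ B (i + j * (γ + 1))) :
    ∀ i, W i j ≤ B (i + j * (γ + 1)) := by
  intro i
  induction i with
  | zero => exact (hW₀ j).trans (hB (Nat.zero_le _))
  | succ i ih => simpa only [add_right_comm i 1] using hW i j _ ih (hrow i)

lemma grid_z_le (hB : Monotone B) (hZ₀ : ∀ i, Z i 0 ≤ B 0) (hW₀ : ∀ j, W 0 j ≤ B 0)
    (hZ : ∀ i j n, W i j ≤ B n → (∀ k ≤ γ, Z (i + k) j ≤ B n) → Z i (j + 1) ≤ B (n + 1))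
    (hW : ∀ i j n, W i j ≤ B n → (∀ k ≤ γ, Z (i + k) j ≤ B n) → W (i + 1) j ≤ B (n + 1)) :
    ∀ j i, ∀ k ≤ γ, Z (i + k) j ≤ B (i + j * (γ + 1)) := by
  intro j
  induction j with
  | zero => exact fun i k _ => (hZ₀ _).trans (hB (Nat.zero_le _))
  | succ j ih =>
    intro i k hk
    have hstep := hZ (i + k) j _ (grid_w_le hB hW₀ hW ih (i + k)) (ih (i + k))
    exact hstep.trans (hB (by nlinarith))

theorem grid_bound (hB : Monotone B) (hZ₀ : ∀ i, Z i 0 ≤ B 0) (hW₀ : ∀ j, W 0 j ≤ B 0)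
    (hZ : ∀ i j n, W i j ≤ B n → (∀ k ≤ γ, Z (i + k) j ≤ B n) → Z i (j + 1) ≤ B (n + 1))
    (hW : ∀ i j n, W i j ≤ B n → (∀ k ≤ γ, Z (i + k) j ≤ B n) → W (i + 1) j ≤ B (n + 1))
    (i j : ℕ) : Z i (j + 1) ≤ B (i + j * (γ + 1) + 1) ∧ W (i + 1) j ≤ B (i + j * (γ + 1) + 1) := by
  have hrow := grid_z_le hB hZ₀ hW₀ hZ hW j
  have hwrow := grid_w_le hB hW₀ hW hrow
  exact ⟨hZ i j _ (hwrow i) (hrow i), by simpa only [add_right_comm i 1] using hwrow (i + 1)⟩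

end Grid
/-- two pairs of positive sequences each satisfying dynamical
inequalities for functions `(t,M)`-close to the same `c`-Lipschitz pair `(ψ, φ)`,
with initial ratio at most `ρ`, stay at ratio at most
`M^{6 P_{i+j(γ+1)}(c)} · ρ^{c̃^{i+1+j(γ+1)}}`. -/
theorem statement12 (α β : ℕ) (c t M : ℝ) (hc : 0 ≤ c) (ht : 1 < t) (hM : 1 ≤ M)
    (ψ : (Fin (α + 2) → ℝ) → ℝ) (φ : (Fin (β + 2) → ℝ) → ℝ)
    (hψ : ∀ v w : Fin (α + 2) → ℝ, |ψ v - ψ w| ≤ c * dist v w)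
    (hφ : ∀ v w : Fin (β + 2) → ℝ, |φ v - φ w| ≤ c * dist v w)
    (f : Fin 2 → Fin 2 → (Fin (α + 2) → ℝ) → ℝ) (g : Fin 2 → Fin 2 → (Fin (β + 2) → ℝ) → ℝ)
    (hfpos : ∀ (k l : Fin 2) (v : Fin (α + 2) → ℝ), (∀ m, 0 < v m) → 0 < f k l v)
    (hgpos : ∀ (k l : Fin 2) (v : Fin (β + 2) → ℝ), (∀ m, 0 < v m) → 0 < g k l v)
    (hf : ∀ (k l : Fin 2) (v : Fin (α + 2) → ℝ), (∀ m, 0 < v m) →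
      |Real.log (f k l v) / Real.log t - ψ (fun m => Real.log (v m) / Real.log t)|
        ≤ Real.log M / Real.log t)
    (hg : ∀ (k l : Fin 2) (v : Fin (β + 2) → ℝ), (∀ m, 0 < v m) →
      |Real.log (g k l v) / Real.log t - φ (fun m => Real.log (v m) / Real.log t)|
        ≤ Real.log M / Real.log t)
    (z w : Fin 2 → ℕ → ℕ → ℝ)
    (hzpos : ∀ (l : Fin 2) (i j : ℕ), 0 < z l i j)
    (hwpos : ∀ (l : Fin 2) (i j : ℕ), 0 < w l i j)
    (hzlow : ∀ (l : Fin 2) (i j : ℕ),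
      f 0 l (Fin.cons (w l i j) (fun k : Fin (α + 1) => z l (i + (k : ℕ)) j)) ≤ z l i (j + 1))
    (hzhigh : ∀ (l : Fin 2) (i j : ℕ),
      z l i (j + 1) ≤ f 1 l (Fin.cons (w l i j) (fun k : Fin (α + 1) => z l (i + (k : ℕ)) j)))
    (hwlow : ∀ (l : Fin 2) (i j : ℕ),
      g 0 l (Fin.cons (w l i j) (fun k : Fin (β + 1) => z l (i + (k : ℕ)) j)) ≤ w l (i + 1) j)
    (hwhigh : ∀ (l : Fin 2) (i j : ℕ),
      w l (i + 1) j ≤ g 1 l (Fin.cons (w l i j) (fun k : Fin (β + 1) => z l (i + (k : ℕ)) j)))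
    (ρ : ℝ) (hρ : 1 ≤ ρ)
    (hρz : ∀ i, z 0 i 0 / z 1 i 0 ≤ ρ ∧ z 1 i 0 / z 0 i 0 ≤ ρ)
    (hρw : ∀ j, w 0 0 j / w 1 0 j ≤ ρ ∧ w 1 0 j / w 0 0 j ≤ ρ) :
    ∀ i j : ℕ,
      max (z 0 i (j + 1) / z 1 i (j + 1)) (z 1 i (j + 1) / z 0 i (j + 1))
        ≤ M ^ (6 * ∑ k ∈ Finset.range (i + j * (max α β + 1) + 1), c ^ k)
          * ρ ^ ((max c 1) ^ (i + 1 + j * (max α β + 1))) ∧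
      max (w 0 (i + 1) j / w 1 (i + 1) j) (w 1 (i + 1) j / w 0 (i + 1) j)
        ≤ M ^ (6 * ∑ k ∈ Finset.range (i + j * (max α β + 1) + 1), c ^ k)
          * ρ ^ ((max c 1) ^ (i + 1 + j * (max α β + 1))) := by
  have ht₀ : 0 < t := zero_lt_one.trans ht
  have hM₀ : 0 < M := zero_lt_one.trans_le hM
  have hρ₀ : 0 < ρ := zero_lt_one.trans_le hρ
  set γ := max α β
  set μ := logb t M
  set B := geomBound (6 * μ) (logb t ρ) c
  have hμ : 0 ≤ μ := logb_nonneg ht hM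
  have hB : Monotone B := geomBound_monotone (by positivity) (logb_nonneg ht hρ) hc
  have hstep : ∀ n, 2 * μ + c * B n ≤ B (n + 1) := fun n =>
    le_trans (by linarith) (add_mul_geomBound_le_succ (logb_nonneg ht hρ) n)
  have hinit : ∀ a b : ℝ, 0 < a → 0 < b → a / b ≤ ρ ∧ b / a ≤ ρ →
      |logb t a - logb t b| ≤ B 0 := fun a b ha hb h => by
    rw [show B 0 = logb t ρ from geomBound_zero _ _ _, ← max_div_div_le_rpow_iff ht ha hb,
      rpow_logb ht₀ ht.ne' hρ₀]
    exact max_le h.1 h.2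
  have hgrid := grid_bound (Z := fun i j => |logb t (z 0 i j) - logb t (z 1 i j)|)
    (W := fun i j => |logb t (w 0 i j) - logb t (w 1 i j)|) hB
    (fun i => hinit _ _ (hzpos 0 i 0) (hzpos 1 i 0) (hρz i))
    (fun j => hinit _ _ (hwpos 0 0 j) (hwpos 1 0 j) (hρw j))
    (fun i j n hwb hzb => (abs_logb_sub_le_of_sandwich ht hc hψ (fun l => hfpos 0 l) hf
      (fun l => hwpos l i j) (fun l k => hzpos l (i + k) j) (hzlow · i j) (hzhigh · i j) hwb
      fun k => hzb k (k.is_le.trans (le_max_left α β))).trans (hstep n))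
    (fun i j n hwb hzb => (abs_logb_sub_le_of_sandwich ht hc hφ (fun l => hgpos 0 l) hg
      (fun l => hwpos l i j) (fun l k => hzpos l (i + k) j) (hwlow · i j) (hwhigh · i j) hwb
      fun k => hzb k (k.is_le.trans (le_max_right α β))).trans (hstep n))
  intro i j
  have hbound : t ^ B (i + j * (γ + 1) + 1) = M ^ (6 * ∑ k ∈ range (i + j * (γ + 1) + 1), c ^ k)
      * ρ ^ (max c 1 ^ (i + 1 + j * (γ + 1))) := by
    rw [← rpow_logb_mul_add_logb_mul ht₀ ht.ne' hM₀ hρ₀, add_right_comm i 1]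
    congr 1
    simp only [B, μ, geomBound]
    ring
  rw [← hbound, max_div_div_le_rpow_iff ht (hzpos 0 i (j + 1)) (hzpos 1 i (j + 1)),
    max_div_div_le_rpow_iff ht (hwpos 0 (i + 1) j) (hwpos 1 (i + 1) j)]
  exact hgrid i j
end

section
/- Let (ψ, φ) extend an automaton on finite sets Q, S ⊂ ℝ and be (δ, μ)-stable (0 < δ < 1, 0 ≤ μ < 1). Let q⁰, …, q^m ∈ Q and p ≥ 1 be such that the p-fold iterate of the composition A_{q^m} ∘ ⋯ ∘ A_{q^0} is the identity map of S^ℕ. Let t > 1, M ≥ 1 and C ≥ 1 satisfy M < C^{1−μ} and 2·log_t C ≤ δ. Let f, g be positive functions (t,M)-close to ψ and φ respectively, and let (z(i,j), w(i,j)) be the rational state system for (f, g) with initial data satisfying C^{−1}·t^{k_i} ≤ z_i ≤ C·t^{k_i} for some k ∈ S^ℕ and C^{−1}·t^{q^{(j mod (m+1))}} ≤ w^j ≤ C·t^{q^{(j mod (m+1))}} for all j. Then max(z(i,j)/z(i,j+p(m+1)l), z(i,j+p(m+1)l)/z(i,j)) ≤ C⁴ for all i, j, l ∈ ℕ. -/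
/-!
On the logarithmic scale `log_t` the rational state system is a perturbation of the automaton:
`f` and `g` differ from `ψ` and `φ` by at most `log_t M`, and `(δ, μ)`-stability shrinks an input
error `ε := log_t C` to `μ ε`. As `M < C^{1-μ}` means `log_t M + μ ε ≤ ε`, the error `ε`
propagates through the whole system: by induction over columns (and, for `w`, over rows)
`log_t z(i,j)` stays within `ε` of `K_j(i)`, where `K_j` is the tape obtained from `k` by the
automata `A_{q^0}, A_{q^1}, …` (indices mod `m+1`), and `log_t w(i,j)` within `ε` of the matching
internal state. The hypothesis on the composite makes `K` periodic in `j` with period `p(m+1)`,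
so `z(i,j)` and `z(i,j+p(m+1)l)` are both `C`-close to `t^{K_j(i)}` and their ratio is at most
`C²`.
-/

/-- The internal state sequence of the automaton `(ψ, φ)` with initial state `q`
reading the input tape `k`: `q_0 = q`, `q_{i+1} = φ(q_i, k_i, …, k_{i+β})`. -/
def qSeq (β : ℕ) (φ : (Fin (β + 2) → ℝ) → ℝ) (q : ℝ) (k : ℕ → ℝ) : ℕ → ℝ
  | 0 => q
  | i + 1 => φ (Fin.cons (qSeq β φ q k i) (fun m : Fin (β + 1) => k (i + (m : ℕ))))

/-- The output sequence `A^{(ψ,φ)}_q(k)`: `k'_i = ψ(q_i, k_i, …, k_{i+α})`. -/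
def outSeq (α β : ℕ) (ψ : (Fin (α + 2) → ℝ) → ℝ) (φ : (Fin (β + 2) → ℝ) → ℝ)
    (q : ℝ) (k : ℕ → ℝ) : ℕ → ℝ :=
  fun i => ψ (Fin.cons (qSeq β φ q k i) (fun m : Fin (α + 1) => k (i + (m : ℕ))))

open Real Function

def StableAt {n : ℕ} (δ μ : ℝ) (F : (Fin n → ℝ) → ℝ) (u : Fin n → ℝ) : Prop :=
  ∀ v, dist v u < δ → |F v - F u| ≤ μ * dist v u

def LogbNear (t ε x u : ℝ) : Prop :=
  0 < x ∧ |logb t x - u| ≤ ε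

/-- Column `j` of the orbit of the tape `k` when the `j`-th automaton has initial state `σ j`. -/
def tapeOrbit (α β : ℕ) (ψ : (Fin (α + 2) → ℝ) → ℝ) (φ : (Fin (β + 2) → ℝ) → ℝ)
    (σ : ℕ → ℝ) (k : ℕ → ℝ) : ℕ → ℕ → ℝ
  | 0 => k
  | j + 1 => outSeq α β ψ φ (σ j) (tapeOrbit α β ψ φ σ k j)

def cyclicState {m : ℕ} (qv : Fin (m + 1) → ℝ) (j : ℕ) : ℝ :=
  qv ⟨j % (m + 1), Nat.mod_lt j (Nat.succ_pos m)⟩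

section Recurrence

variable {X : Type*} {x : ℕ → X} {F : ℕ → X → X}

theorem foldl_eq_of_recurrence {Y : Type*} (hx : ∀ j, x (j + 1) = F j (x j)) (G : X → Y → X) :
    ∀ (L : List Y) (a : ℕ), (∀ (i : ℕ) (hi : i < L.length), F (a + i) = fun y => G y L[i]) →
      x (a + L.length) = L.foldl G (x a)
  | [], _, _ => rfl
  | y :: L, a, hL => by
    have hstep : x (a + 1) = G (x a) y := by
      have h0 := hL 0 (by simp)
      rw [add_zero] at h0
      rw [hx, h0]
      rfl
    rw [List.foldl_cons, ← hstep, List.length_cons, ← add_comm 1, ← add_assoc]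
    refine foldl_eq_of_recurrence hx G L (a + 1) fun i hi => ?_
    rw [add_assoc, add_comm 1, hL (i + 1) (by simpa using hi)]
    rfl

theorem periodic_of_recurrence {c : ℕ} (hx : ∀ j, x (j + 1) = F j (x j)) (hF : Periodic F c)
    (hc : x c = x 0) : Periodic x c := by
  intro j
  induction j with
  | zero => rwa [zero_add]
  | succ j ih => rw [add_right_comm, hx, hx, hF, ih]

end Recurrence

section Orbit

variable {α β m : ℕ} {ψ : (Fin (α + 2) → ℝ) → ℝ} {φ : (Fin (β + 2) → ℝ) → ℝ}
  {qv : Fin (m + 1) → ℝ}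

theorem tapeOrbit_mul_eq_iterate (k : ℕ → ℝ) (n : ℕ) :
    tapeOrbit α β ψ φ (cyclicState qv) k (n * (m + 1)) =
      (fun kk : ℕ → ℝ =>
        (List.ofFn qv).foldl (fun kk' qq => outSeq α β ψ φ qq kk') kk)^[n] k := by
  induction n with
  | zero => simp [tapeOrbit]
  | succ n ih =>
    rw [iterate_succ_apply', ← ih, add_one_mul]
    have h := foldl_eq_of_recurrence (x := tapeOrbit α β ψ φ (cyclicState qv) k) (fun _ => rfl)
      (fun kk' qq => outSeq α β ψ φ qq kk') (List.ofFn qv) (n * (m + 1)) fun i hi => ?_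
    · rwa [List.length_ofFn] at h
    rw [List.length_ofFn] at hi
    have hmod : (n * (m + 1) + i) % (m + 1) = i := by
      rw [Nat.mul_add_mod', Nat.mod_eq_of_lt hi]
    simp only [cyclicState, hmod, List.getElem_ofFn]

theorem tapeOrbit_periodic {p : ℕ} {k : ℕ → ℝ}
    (hk : (fun kk : ℕ → ℝ =>
      (List.ofFn qv).foldl (fun kk' qq => outSeq α β ψ φ qq kk') kk)^[p] k = k) :
    Periodic (tapeOrbit α β ψ φ (cyclicState qv) k) (p * (m + 1)) := by
  refine periodic_of_recurrence (fun _ => rfl) (fun j => ?_) ?_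
  · simp only [cyclicState, Nat.add_mul_mod_self_right]
  · rw [tapeOrbit_mul_eq_iterate, hk]
    rfl

end Orbit

section LogScale

variable {t ε C x y u : ℝ}

theorem logbNear_of_mem_Icc (ht : 1 < t) (hC : 0 < C)
    (h : C⁻¹ * t ^ u ≤ x ∧ x ≤ C * t ^ u) : LogbNear t (logb t C) x u := by
  have htu : 0 < t ^ u := rpow_pos_of_pos (by linarith) u
  have hlo0 : 0 < C⁻¹ * t ^ u := mul_pos (inv_pos.2 hC) htu
  have hx : 0 < x := hlo0.trans_le h.1
  have hlogb (c : ℝ) (hc : 0 < c) : logb t (c * t ^ u) = logb t c + u := by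
    rw [logb_mul hc.ne' htu.ne', logb_rpow (by linarith) ht.ne']
  have hlo := logb_le_logb_of_le ht hlo0 h.1
  have hhi := logb_le_logb_of_le ht hx h.2
  rw [hlogb _ (inv_pos.2 hC), logb_inv] at hlo
  rw [hlogb _ hC] at hhi
  exact ⟨hx, abs_sub_le_iff.2 ⟨by linarith, by linarith⟩⟩

theorem div_le_sq_of_logbNear (ht : 1 < t) (hC : 0 < C) (hx : LogbNear t (logb t C) x u)
    (hy : LogbNear t (logb t C) y u) : x / y ≤ C ^ 2 := by
  obtain ⟨hx0, hxu⟩ := hx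
  obtain ⟨hy0, hyu⟩ := hy
  rw [← logb_le_logb ht (div_pos hx0 hy0) (pow_pos hC 2), logb_div hx0.ne' hy0.ne',
    logb_pow]
  push_cast
  linarith [le_abs_self (logb t x - u), neg_abs_le (logb t y - u)]

theorem logb_add_mul_logb_le {μ M : ℝ} (ht : 1 < t) (hM : 0 < M) (hC : 0 < C)
    (hMC : M < C ^ (1 - μ)) : logb t M + μ * logb t C ≤ logb t C := by
  have h := logb_lt_logb ht hM hMC
  rw [logb_rpow_eq_mul_logb_of_pos hC] at h
  linarith

theorem logbNear_cons {n : ℕ} {a b : ℝ} {s r : Fin (n + 1) → ℝ} (ha : LogbNear t ε a b)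
    (hs : ∀ k, LogbNear t ε (s k) (r k)) :
    ∀ k, LogbNear t ε ((Fin.cons a s : Fin (n + 2) → ℝ) k) ((Fin.cons b r : Fin (n + 2) → ℝ) k) :=
  Fin.forall_fin_succ.2 ⟨by simpa using ha, by simpa using hs⟩

end LogScale

theorem StableAt.abs_sub_le_add_mul {n : ℕ} {δ μ ε η y : ℝ} {F : (Fin n → ℝ) → ℝ} {u x : Fin n → ℝ}
    (hF : StableAt δ μ F u) (hμ : 0 ≤ μ) (hε : 0 ≤ ε) (hεδ : ε < δ)
    (hx : ∀ k, |x k - u k| ≤ ε) (hy : |y - F x| ≤ η) : |y - F u| ≤ η + μ * ε := by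
  have hdist : dist x u ≤ ε := (dist_pi_le_iff hε).2 fun k => by rw [Real.dist_eq]; exact hx k
  calc |y - F u| ≤ |y - F x| + |F x - F u| := abs_sub_le _ _ _
    _ ≤ η + μ * ε := add_le_add hy <|
        (hF x (hdist.trans_lt hεδ)).trans (mul_le_mul_of_nonneg_left hdist hμ)

section Shadowing

variable {t ε δ μ η : ℝ} {Q S T : Set ℝ}

theorem logbNear_apply {n : ℕ} {F G : (Fin (n + 2) → ℝ) → ℝ}
    (hstab : ∀ (q : ℝ) (s : Fin (n + 1) → ℝ), q ∈ Q → (∀ k, s k ∈ S) →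
      StableAt δ μ F (Fin.cons q s))
    (hext : ∀ (q : ℝ) (s : Fin (n + 1) → ℝ), q ∈ Q → (∀ k, s k ∈ S) → F (Fin.cons q s) ∈ T)
    (hpos : ∀ v : Fin (n + 2) → ℝ, (∀ k, 0 < v k) → 0 < G v)
    (hclose : ∀ v : Fin (n + 2) → ℝ, (∀ k, 0 < v k) →
      |logb t (G v) - F (fun k => logb t (v k))| ≤ η)
    (hμ : 0 ≤ μ) (hε : 0 ≤ ε) (hεδ : ε < δ) (hηε : η + μ * ε ≤ ε)
    {q a : ℝ} {s r : Fin (n + 1) → ℝ} (hq : q ∈ Q ∧ LogbNear t ε a q)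
    (hs : ∀ k, s k ∈ S ∧ LogbNear t ε (r k) (s k)) :
    F (Fin.cons q s) ∈ T ∧ LogbNear t ε (G (Fin.cons a r)) (F (Fin.cons q s)) := by
  have hnear := logbNear_cons hq.2 fun k => (hs k).2
  have hv : ∀ k, 0 < (Fin.cons a r : Fin (n + 2) → ℝ) k := fun k => (hnear k).1
  refine ⟨hext q s hq.1 fun k => (hs k).1, hpos _ hv, ?_⟩
  exact ((hstab q s hq.1 fun k => (hs k).1).abs_sub_le_add_mul hμ hε hεδ (fun k => (hnear k).2)
    (hclose _ hv)).trans hηε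

theorem logbNear_tapeOrbit {α β : ℕ} {ψ : (Fin (α + 2) → ℝ) → ℝ} {φ : (Fin (β + 2) → ℝ) → ℝ}
    {f : (Fin (α + 2) → ℝ) → ℝ} {g : (Fin (β + 2) → ℝ) → ℝ}
    (hext1 : ∀ (q : ℝ) (s : Fin (α + 1) → ℝ), q ∈ Q → (∀ k, s k ∈ S) → ψ (Fin.cons q s) ∈ S)
    (hext2 : ∀ (q : ℝ) (s : Fin (β + 1) → ℝ), q ∈ Q → (∀ k, s k ∈ S) → φ (Fin.cons q s) ∈ Q)
    (hstab1 : ∀ (q : ℝ) (s : Fin (α + 1) → ℝ), q ∈ Q → (∀ k, s k ∈ S) →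
      StableAt δ μ ψ (Fin.cons q s))
    (hstab2 : ∀ (q : ℝ) (s : Fin (β + 1) → ℝ), q ∈ Q → (∀ k, s k ∈ S) →
      StableAt δ μ φ (Fin.cons q s))
    (hfpos : ∀ v : Fin (α + 2) → ℝ, (∀ k, 0 < v k) → 0 < f v)
    (hgpos : ∀ v : Fin (β + 2) → ℝ, (∀ k, 0 < v k) → 0 < g v)
    (hf : ∀ v : Fin (α + 2) → ℝ, (∀ k, 0 < v k) →
      |logb t (f v) - ψ (fun k => logb t (v k))| ≤ η)
    (hg : ∀ v : Fin (β + 2) → ℝ, (∀ k, 0 < v k) →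
      |logb t (g v) - φ (fun k => logb t (v k))| ≤ η)
    (hμ : 0 ≤ μ) (hε : 0 ≤ ε) (hεδ : ε < δ) (hηε : η + μ * ε ≤ ε)
    {σ k : ℕ → ℝ} {z w : ℕ → ℕ → ℝ}
    (hz0 : ∀ i, k i ∈ S ∧ LogbNear t ε (z i 0) (k i))
    (hw0 : ∀ j, σ j ∈ Q ∧ LogbNear t ε (w 0 j) (σ j))
    (hz : ∀ i j, z i (j + 1) = f (Fin.cons (w i j) (fun k : Fin (α + 1) => z (i + (k : ℕ)) j)))
    (hw : ∀ i j, w (i + 1) j = g (Fin.cons (w i j) (fun k : Fin (β + 1) => z (i + (k : ℕ)) j)))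
    (j i : ℕ) :
    tapeOrbit α β ψ φ σ k j i ∈ S ∧ LogbNear t ε (z i j) (tapeOrbit α β ψ φ σ k j i) := by
  induction j generalizing i with
  | zero => exact hz0 i
  | succ j ih =>
    have hstate : ∀ i, qSeq β φ (σ j) (tapeOrbit α β ψ φ σ k j) i ∈ Q ∧
        LogbNear t ε (w i j) (qSeq β φ (σ j) (tapeOrbit α β ψ φ σ k j) i) := by
      intro i
      induction i with
      | zero => exact hw0 j
      | succ i ihi =>
        rw [hw]
        exact logbNear_apply hstab2 hext2 hgpos hg hμ hε hεδ hηε ihi fun _ => ih _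
    rw [hz]
    exact logbNear_apply hstab1 hext1 hfpos hf hμ hε hεδ hηε (hstate i) fun _ => ih _

end Shadowing

theorem statement17_general (α β : ℕ) (Q S : Finset ℝ) (δ μ : ℝ)
    (hδ0 : 0 < δ) (hμ0 : 0 ≤ μ)
    (ψ : (Fin (α + 2) → ℝ) → ℝ) (φ : (Fin (β + 2) → ℝ) → ℝ)
    (hext1 : ∀ (q : ℝ) (s : Fin (α + 1) → ℝ), q ∈ Q → (∀ k, s k ∈ S) →
      ψ (Fin.cons q s) ∈ S)
    (hext2 : ∀ (q : ℝ) (s : Fin (β + 1) → ℝ), q ∈ Q → (∀ k, s k ∈ S) →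
      φ (Fin.cons q s) ∈ Q)
    (hstab1 : ∀ (q : ℝ) (s : Fin (α + 1) → ℝ), q ∈ Q → (∀ k, s k ∈ S) →
      ∀ v : Fin (α + 2) → ℝ, dist v (Fin.cons q s) < δ →
        |ψ v - ψ (Fin.cons q s)| ≤ μ * dist v (Fin.cons q s))
    (hstab2 : ∀ (q : ℝ) (s : Fin (β + 1) → ℝ), q ∈ Q → (∀ k, s k ∈ S) →
      ∀ v : Fin (β + 2) → ℝ, dist v (Fin.cons q s) < δ →
        |φ v - φ (Fin.cons q s)| ≤ μ * dist v (Fin.cons q s))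
    (m : ℕ) (qv : Fin (m + 1) → ℝ) (hqv : ∀ j, qv j ∈ Q)
    (p : ℕ)
    (hper : ∀ k : ℕ → ℝ, (∀ i, k i ∈ S) →
      (fun kk : ℕ → ℝ =>
        (List.ofFn qv).foldl (fun kk' qq => outSeq α β ψ φ qq kk') kk)^[p] k = k)
    (t M C : ℝ) (ht : 1 < t) (hM : 1 ≤ M) (hC : 1 ≤ C)
    (hMC : M < C ^ (1 - μ)) (hCδ : 2 * (Real.log C / Real.log t) ≤ δ)
    (f : (Fin (α + 2) → ℝ) → ℝ) (g : (Fin (β + 2) → ℝ) → ℝ)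
    (hfpos : ∀ v : Fin (α + 2) → ℝ, (∀ k, 0 < v k) → 0 < f v)
    (hgpos : ∀ v : Fin (β + 2) → ℝ, (∀ k, 0 < v k) → 0 < g v)
    (hf : ∀ v : Fin (α + 2) → ℝ, (∀ k, 0 < v k) →
      |Real.log (f v) / Real.log t - ψ (fun k => Real.log (v k) / Real.log t)|
        ≤ Real.log M / Real.log t)
    (hg : ∀ v : Fin (β + 2) → ℝ, (∀ k, 0 < v k) →
      |Real.log (g v) / Real.log t - φ (fun k => Real.log (v k) / Real.log t)|
        ≤ Real.log M / Real.log t)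
    (k0 : ℕ → ℝ) (hk0 : ∀ i, k0 i ∈ S)
    (z w : ℕ → ℕ → ℝ)
    (hz0 : ∀ i, C⁻¹ * t ^ k0 i ≤ z i 0 ∧ z i 0 ≤ C * t ^ k0 i)
    (hw0 : ∀ j : ℕ, C⁻¹ * t ^ qv ⟨j % (m + 1), Nat.mod_lt j (Nat.succ_pos m)⟩ ≤ w 0 j ∧
      w 0 j ≤ C * t ^ qv ⟨j % (m + 1), Nat.mod_lt j (Nat.succ_pos m)⟩)
    (hz : ∀ i j, z i (j + 1) = f (Fin.cons (w i j) (fun k : Fin (α + 1) => z (i + (k : ℕ)) j)))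
    (hw : ∀ i j, w (i + 1) j = g (Fin.cons (w i j) (fun k : Fin (β + 1) => z (i + (k : ℕ)) j))) :
    ∀ i j l : ℕ,
      max (z i j / z i (j + p * (m + 1) * l)) (z i (j + p * (m + 1) * l) / z i j) ≤ C ^ 4 := by
  intro i j l
  have hC0 : 0 < C := one_pos.trans_le hC
  have hε : 0 ≤ logb t C := logb_nonneg ht hC
  have hεδ : logb t C < δ := by
    change 2 * logb t C ≤ δ at hCδ
    linarith
  have hηε := logb_add_mul_logb_le ht (one_pos.trans_le hM) hC0 hMC
  have hnear := logbNear_tapeOrbit (σ := cyclicState qv) hext1 hext2 hstab1 hstab2 hfpos hgpos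
    hf hg hμ0 hε hεδ hηε (fun i => ⟨hk0 i, logbNear_of_mem_Icc ht hC0 (hz0 i)⟩)
    (fun j => ⟨hqv _, logbNear_of_mem_Icc ht hC0 (hw0 j)⟩) hz hw
  have hperiod : tapeOrbit α β ψ φ (cyclicState qv) k0 (j + p * (m + 1) * l) =
      tapeOrbit α β ψ φ (cyclicState qv) k0 j := by
    rw [mul_comm _ l]
    exact (tapeOrbit_periodic (hper k0 hk0)).nat_mul l j
  have hzj := (hnear j i).2
  have hzjl := (hnear (j + p * (m + 1) * l) i).2
  rw [hperiod] at hzjl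
  have hC24 : C ^ 2 ≤ C ^ 4 := pow_le_pow_right₀ hC (by norm_num)
  exact max_le ((div_le_sq_of_logbNear ht hC0 hzj hzjl).trans hC24)
    ((div_le_sq_of_logbNear ht hC0 hzjl hzj).trans hC24)

/-- if the composition `A_{q^m} ∘ ⋯ ∘ A_{q^0}` has a `p`-fold iterate equal
to the identity on `S^ℕ`, then the rational state system of a `(t,M)`-close pair with
exponentially comparable, periodically chosen initial data is quasi-periodic:
`(z(i,j)/z(i,j+p(m+1)l))^{±1} ≤ C⁴`. -/
theorem statement17 (α β : ℕ) (Q S : Finset ℝ) (δ μ : ℝ)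
    (hδ0 : 0 < δ) (hδ1 : δ < 1) (hμ0 : 0 ≤ μ) (hμ1 : μ < 1)
    (ψ : (Fin (α + 2) → ℝ) → ℝ) (φ : (Fin (β + 2) → ℝ) → ℝ)
    (hext1 : ∀ (q : ℝ) (s : Fin (α + 1) → ℝ), q ∈ Q → (∀ k, s k ∈ S) →
      ψ (Fin.cons q s) ∈ S)
    (hext2 : ∀ (q : ℝ) (s : Fin (β + 1) → ℝ), q ∈ Q → (∀ k, s k ∈ S) →
      φ (Fin.cons q s) ∈ Q)
    (hstab1 : ∀ (q : ℝ) (s : Fin (α + 1) → ℝ), q ∈ Q → (∀ k, s k ∈ S) →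
      ∀ v : Fin (α + 2) → ℝ, dist v (Fin.cons q s) < δ →
        |ψ v - ψ (Fin.cons q s)| ≤ μ * dist v (Fin.cons q s))
    (hstab2 : ∀ (q : ℝ) (s : Fin (β + 1) → ℝ), q ∈ Q → (∀ k, s k ∈ S) →
      ∀ v : Fin (β + 2) → ℝ, dist v (Fin.cons q s) < δ →
        |φ v - φ (Fin.cons q s)| ≤ μ * dist v (Fin.cons q s))
    (m : ℕ) (qv : Fin (m + 1) → ℝ) (hqv : ∀ j, qv j ∈ Q)
    (p : ℕ) (hp : 1 ≤ p)
    (hper : ∀ k : ℕ → ℝ, (∀ i, k i ∈ S) →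
      (fun kk : ℕ → ℝ =>
        (List.ofFn qv).foldl (fun kk' qq => outSeq α β ψ φ qq kk') kk)^[p] k = k)
    (t M C : ℝ) (ht : 1 < t) (hM : 1 ≤ M) (hC : 1 ≤ C)
    (hMC : M < C ^ (1 - μ)) (hCδ : 2 * (Real.log C / Real.log t) ≤ δ)
    (f : (Fin (α + 2) → ℝ) → ℝ) (g : (Fin (β + 2) → ℝ) → ℝ)
    (hfpos : ∀ v : Fin (α + 2) → ℝ, (∀ k, 0 < v k) → 0 < f v)
    (hgpos : ∀ v : Fin (β + 2) → ℝ, (∀ k, 0 < v k) → 0 < g v)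
    (hf : ∀ v : Fin (α + 2) → ℝ, (∀ k, 0 < v k) →
      |Real.log (f v) / Real.log t - ψ (fun k => Real.log (v k) / Real.log t)|
        ≤ Real.log M / Real.log t)
    (hg : ∀ v : Fin (β + 2) → ℝ, (∀ k, 0 < v k) →
      |Real.log (g v) / Real.log t - φ (fun k => Real.log (v k) / Real.log t)|
        ≤ Real.log M / Real.log t)
    (k0 : ℕ → ℝ) (hk0 : ∀ i, k0 i ∈ S)
    (z w : ℕ → ℕ → ℝ)
    (hz0 : ∀ i, C⁻¹ * t ^ k0 i ≤ z i 0 ∧ z i 0 ≤ C * t ^ k0 i)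
    (hw0 : ∀ j : ℕ, C⁻¹ * t ^ qv ⟨j % (m + 1), Nat.mod_lt j (Nat.succ_pos m)⟩ ≤ w 0 j ∧
      w 0 j ≤ C * t ^ qv ⟨j % (m + 1), Nat.mod_lt j (Nat.succ_pos m)⟩)
    (hz : ∀ i j, z i (j + 1) = f (Fin.cons (w i j) (fun k : Fin (α + 1) => z (i + (k : ℕ)) j)))
    (hw : ∀ i j, w (i + 1) j = g (Fin.cons (w i j) (fun k : Fin (β + 1) => z (i + (k : ℕ)) j))) :
    ∀ i j l : ℕ,
      max (z i j / z i (j + p * (m + 1) * l)) (z i (j + p * (m + 1) * l) / z i j) ≤ C ^ 4 :=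
  statement17_general α β Q S δ μ hδ0 hμ0 ψ φ hext1 hext2 hstab1 hstab2 m qv hqv p hper t M C ht hM
    hC hMC hCδ f g hfpos hgpos hf hg k0 hk0 z w hz0 hw0 hz hw
end
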